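/- Let ψ be an aperiodic multisegment, l ≥ 1, and v ∈ V_l. For i ∈ ℤ/eℤ, let κ_i(v) = #{c ∈ {0,…,l−1} : v_c ≡ i (mod e)}. Then there exists a FLOTW l-partition λ ∈ Φ_e(v) with f_v(λ) = ψ if and only if κ_i(v) ≥ r̂_i(ψ) for every i ∈ ℤ/eℤ. -/

import Mathlib

namespace AffineA

/-- A multisegment: a multiset of segments, each recorded as a pair
(head, length) with head in `ZMod e` and (positive) length in `ℕ`. -/
abbrev Multisegment (e : ℕ) := Multiset (ZMod e × ℕ)

variable {e : ℕ}

/-- Every segment occurring in the multisegment has positive length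
(part of the definition of a multisegment). -/
def Proper (ψ : Multisegment e) : Prop := ∀ p ∈ ψ, 0 < p.2

/-- A multisegment is aperiodic if for every length `l > 0` some residue `i`
carries no segment `[i;l)`. -/
def Aperiodic (ψ : Multisegment e) : Prop :=
  ∀ l : ℕ, 0 < l → ∃ i : ZMod e, ψ.count (i, l) = 0

/-- The segment with tail `t` and length `l`, written in (head, length) form:
`(l;t] = [t-l+1;l)`. -/
def seg (t : ZMod e) (l : ℕ) : ZMod e × ℕ := (t - (l : ZMod e) + 1, l)

/-- A letter of the words used in the cancellation process: `false` = R,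
`true` = A, labelled by its length. -/
abbrev Letter := Bool × ℕ

/-- One step of the stack-based cancellation of factors `RA`: an incoming `A`
cancels a pending `R`. The stack holds the reduced word so far, in reversed
order (first entry = rightmost letter). -/
def step : List Letter → Letter → List Letter
  | (false, _) :: rest, (true, _) => rest
  | s, x => x :: s

/-- The reduced word obtained by deleting factors `RA` as many times as
possible, in reversed order (first entry = rightmost letter). -/
def reduce (w : List Letter) : List Letter := w.foldl step []

/-- The word `∏_{l=1}^{N} R^{fR l} A^{fA l}` (letters listed for `l = 1, 2, …`
from left to right, each letter labelled by its length). -/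
def word (N : ℕ) (fR fA : ℕ → ℕ) : List Letter :=
  (List.range N).flatMap fun k =>
    List.replicate (fR (k + 1)) ((false : Bool), k + 1) ++
      List.replicate (fA (k + 1)) ((true : Bool), k + 1)

/-- A bound exceeding the length of every segment of `ψ`. -/
def bound (ψ : Multisegment e) : ℕ := (ψ.map Prod.snd).sum + 1

/-- The word `w_i(ψ) = ∏_{l ≥ 1} R^{m_{(l;i]}} A^{m_{(l;i-1]}}`. -/
def wTil (ψ : Multisegment e) (i : ZMod e) : List Letter :=
  word (bound ψ) (fun l => ψ.count (seg i l)) (fun l => ψ.count (seg (i - 1) l))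

/-- The word `ŵ_i(ψ) = ∏_{l ≥ 1} R̂^{m_{[i;l)}} Â^{m_{[i+1;l)}}`. -/
def wHat (ψ : Multisegment e) (i : ZMod e) : List Letter :=
  word (bound ψ) (fun l => ψ.count (i, l)) (fun l => ψ.count (i + 1, l))

/-- `a_i(ψ)`: number of letters `A` in the reduced word of `w_i(ψ)`. -/
def aTil (ψ : Multisegment e) (i : ZMod e) : ℕ :=
  ((reduce (wTil ψ i)).filter fun x => x.1).length

/-- `r_i(ψ)`: number of letters `R` in the reduced word of `w_i(ψ)`. -/
def rTil (ψ : Multisegment e) (i : ZMod e) : ℕ :=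
  ((reduce (wTil ψ i)).filter fun x => !x.1).length

/-- `l_{0,i}(ψ)`: length label of the rightmost letter `A` of the reduced word
of `w_i(ψ)`, and `0` if there is no letter `A`. -/
def l0Til (ψ : Multisegment e) (i : ZMod e) : ℕ :=
  (((reduce (wTil ψ i)).filter fun x => x.1).headI).2

/-- `â_i(ψ)`: number of letters `Â` in the reduced word of `ŵ_i(ψ)`. -/
def aHat (ψ : Multisegment e) (i : ZMod e) : ℕ :=
  ((reduce (wHat ψ i)).filter fun x => x.1).length

/-- `r̂_i(ψ)`: number of letters `R̂` in the reduced word of `ŵ_i(ψ)`. -/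
def rHat (ψ : Multisegment e) (i : ZMod e) : ℕ :=
  ((reduce (wHat ψ i)).filter fun x => !x.1).length

/-- `l̂_{0,i}(ψ)`: length label of the rightmost letter `Â` of the reduced word
of `ŵ_i(ψ)`, and `0` if there is no letter `Â`. -/
def l0Hat (ψ : Multisegment e) (i : ZMod e) : ℕ :=
  (((reduce (wHat ψ i)).filter fun x => x.1).headI).2

/-- The crystal operator `f̃_i`: adds `(1;i]` if `a_i(ψ) = 0`, and otherwise
replaces a segment `(l₀-1;i-1]` by `(l₀;i]` (nothing removed if `l₀ = 1`). -/
def ftil (i : ZMod e) (ψ : Multisegment e) : Multisegment e :=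
  if aTil ψ i = 0 then ψ + {seg i 1}
  else if l0Til ψ i = 1 then ψ + {seg i 1}
  else ψ + {seg i (l0Til ψ i)} - {seg (i - 1) (l0Til ψ i - 1)}

/-- The operator `f̂_i`: adds `[i;1)` if `â_i(ψ) = 0`, and otherwise replaces a
segment `[i+1;l̂₀-1)` by `[i;l̂₀)` (nothing removed if `l̂₀ = 1`). -/
def fhat (i : ZMod e) (ψ : Multisegment e) : Multisegment e :=
  if aHat ψ i = 0 then ψ + {((i : ZMod e), 1)}
  else if l0Hat ψ i = 1 then ψ + {((i : ZMod e), 1)}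
  else ψ + {((i : ZMod e), l0Hat ψ i)} - {((i + 1 : ZMod e), l0Hat ψ i - 1)}

/-- The involution `ρ`, sending each segment `[i;l)` to `(l;-i]`. -/
def rho (ψ : Multisegment e) : Multisegment e :=
  ψ.map fun p => (-p.1 - (p.2 : ZMod e) + 1, p.2)

/-- An `l`-partition, recorded with 0-indexed rows: `p c j` is the `(j+1)`-th
part `λ^c_{j+1}` of the partition `λ^c`; parts are weakly decreasing and
eventually zero. -/
def IsLPartition {l : ℕ} (p : Fin l → ℕ → ℕ) : Prop :=
  (∀ c j, p c (j + 1) ≤ p c j) ∧ ∀ c, ∃ B, ∀ j, B ≤ j → p c j = 0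

/-- A multicharge `v ∈ V_l`: weakly increasing with all differences `< e`. -/
def IsMulticharge (e : ℕ) {l : ℕ} (v : Fin l → ℤ) : Prop :=
  Monotone v ∧ ∀ c c' : Fin l, v c' - v c < e

/-- The FLOTW conditions on an `l`-partition for the multicharge `v`
(rows are 0-indexed: the paper's `λ^c_i` is `p c (i-1)`). -/
def FLOTW (e : ℕ) {l : ℕ} (v : Fin l → ℤ) (p : Fin l → ℕ → ℕ) : Prop :=
  IsLPartition p ∧
  (∀ (c : ℕ) (h : c + 1 < l) (j : ℕ),
    p ⟨c + 1, h⟩ (j + (v ⟨c + 1, h⟩ - v ⟨c, Nat.lt_of_succ_lt h⟩).toNat) ≤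
      p ⟨c, Nat.lt_of_succ_lt h⟩ j) ∧
  (∀ (hl : 0 < l) (j : ℕ),
    p ⟨0, hl⟩ (j + ((e : ℤ) + v ⟨0, hl⟩ - v ⟨l - 1, Nat.sub_lt hl Nat.one_pos⟩).toNat) ≤
      p ⟨l - 1, Nat.sub_lt hl Nat.one_pos⟩ j) ∧
  (∀ k : ℕ, 0 < k → ∃ r : ZMod e, ∀ (c : Fin l) (j : ℕ), p c j = k →
    (((k : ℤ) - ((j : ℤ) + 1) + v c : ℤ) : ZMod e) ≠ r)

/-- The multisegment `f_v(λ)`: each nonzero part `λ^c_i` contributes the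
segment with head `(1 - i + v_c) mod e` and length `λ^c_i` (here the part is
`p c j` with `i = j + 1`, so the head is `(v_c - j) mod e`). -/
noncomputable def fv (e : ℕ) {l : ℕ} (v : Fin l → ℤ) (p : Fin l → ℕ → ℕ) :
    Multisegment e :=
  ∑ᶠ (c : Fin l) (j : ℕ),
    if 0 < p c j then ({(((v c - (j : ℤ) : ℤ) : ZMod e), p c j)} : Multisegment e) else 0

/-!
Reading the cancellation of `R̂Â` length by length, `r̂_i(ψ) ≤ κ` holds iff for every `L ≥ 1` the
number `N_i(L)` of segments of `ψ` with head `i` and length `≥ L` is at most `N_{i+1}(L) + κ`.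

For `ψ = f_v(λ)`, a part `≥ L` of head `i` in row `j + 1` sits under a part `≥ L` of head `i + 1`
in row `j`, and row `0` has at most `κ_i(v)` parts of head `i`; this gives the inequality.

Conversely, the rows `(c, j)` of a given head form one infinite chain, ordered by decreasing
content `v_c - j` and then by `c`, and the adjacency conditions of FLOTW say exactly that parts
weakly decrease along every chain. Filling each chain with the lengths of the segments of that
head, in decreasing order, gives `f_v(λ) = ψ`. Going one row down in a component moves from the
chain of `i + 1` to that of `i` and raises the rank by `κ_i(v)`, so `N_i(L) ≤ N_{i+1}(L) + κ_i(v)`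
is precisely what makes each `λ^c` a partition; aperiodicity gives the residue condition.
-/

section Reduction

lemma step_false (s : List Letter) (k : ℕ) : step s (false, k) = (false, k) :: s := by
  rcases s with _ | ⟨⟨_ | _, _⟩, _⟩ <;> rfl

lemma foldl_step_replicate_false (n k : ℕ) (s : List Letter) :
    (List.replicate n (false, k)).foldl step s = List.replicate n (false, k) ++ s := by
  induction n generalizing s with
  | zero => rfl
  | succ n ih =>
    conv_lhs => rw [List.replicate_succ, List.foldl_cons, step_false, ih]
    rw [List.replicate_succ', List.append_assoc, List.singleton_append]

lemma foldl_step_replicate_true (n k : ℕ) (Rs As : List ℕ) :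
    (List.replicate n (true, k)).foldl step (Rs.map (false, ·) ++ As.map (true, ·)) =
      (Rs.drop n).map (false, ·) ++ (List.replicate (n - Rs.length) k ++ As).map (true, ·) := by
  induction n generalizing Rs As with
  | zero => simp
  | succ n ih =>
    rw [List.replicate_succ, List.foldl_cons]
    rcases Rs with _ | ⟨r, Rs⟩
    · have hpush : step (As.map (true, ·)) (true, k) = (k :: As).map (true, ·) := by
        rcases As with _ | _ <;> rfl
      simpa [hpush, List.replicate_succ'] using ih [] (k :: As)
    · simpa [step] using ih Rs As

def reducedRCount (fR fA : ℕ → ℕ) : ℕ → ℕ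
  | 0 => 0
  | N + 1 => reducedRCount fR fA N + fR (N + 1) - fA (N + 1)

lemma reduce_word (fR fA : ℕ → ℕ) (N : ℕ) :
    ∃ Rs As : List ℕ, reduce (word N fR fA) = Rs.map (false, ·) ++ As.map (true, ·) ∧
      Rs.length = reducedRCount fR fA N := by
  induction N with
  | zero => exact ⟨[], [], rfl, rfl⟩
  | succ N ih =>
    obtain ⟨Rs, As, hred, hlen⟩ := ih
    refine ⟨(List.replicate (fR (N + 1)) (N + 1) ++ Rs).drop (fA (N + 1)),
      List.replicate (fA (N + 1) - (fR (N + 1) + Rs.length)) (N + 1) ++ As, ?_, ?_⟩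
    · have := foldl_step_replicate_true (fA (N + 1)) (N + 1)
        (List.replicate (fR (N + 1)) (N + 1) ++ Rs) As
      simp only [reduce, word, List.range_succ, List.flatMap_append] at hred ⊢
      simpa [List.foldl_append, hred, foldl_step_replicate_false] using this
    · simp only [List.length_drop, List.length_append, List.length_replicate, hlen,
        reducedRCount]
      omega

lemma rHat_eq_reducedRCount (ψ : Multisegment e) (i : ZMod e) :
    rHat ψ i = reducedRCount (fun l => ψ.count (i, l)) (fun l => ψ.count (i + 1, l)) (bound ψ) := by
  obtain ⟨Rs, As, hred, hlen⟩ :=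
    reduce_word (fun l => ψ.count (i, l)) (fun l => ψ.count (i + 1, l)) (bound ψ)
  simp [rHat, wHat, hred, List.filter_map, Function.comp_def, hlen]

lemma reducedRCount_le_iff (fR fA : ℕ → ℕ) (N κ : ℕ) :
    reducedRCount fR fA N ≤ κ ↔
      ∀ L, 1 ≤ L → L ≤ N → ∑ l ∈ Finset.Icc L N, fR l ≤ ∑ l ∈ Finset.Icc L N, fA l + κ := by
  induction N generalizing κ with
  | zero => exact iff_of_true (Nat.zero_le κ) fun L hL hL0 => absurd hL0 (by omega)
  | succ N ih =>
    have hstep : reducedRCount fR fA (N + 1) ≤ κ ↔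
        fR (N + 1) ≤ fA (N + 1) + κ ∧ reducedRCount fR fA N ≤ fA (N + 1) + κ - fR (N + 1) := by
      simp only [reducedRCount]
      omega
    rw [hstep, ih]
    constructor
    · rintro ⟨htop, htail⟩ L hL hLN
      rcases hLN.lt_or_eq with hLN | rfl
      · have := htail L hL (by omega)
        rw [Finset.sum_Icc_succ_top (by omega), Finset.sum_Icc_succ_top (by omega)]
        omega
      · simpa using htop
    · intro h
      have htop : fR (N + 1) ≤ fA (N + 1) + κ := by simpa using h (N + 1) (by omega) le_rfl
      refine ⟨htop, fun L hL hLN => ?_⟩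
      have := h L hL (by omega)
      rw [Finset.sum_Icc_succ_top (by omega), Finset.sum_Icc_succ_top (by omega)] at this
      omega

end Reduction

section Counting

def countGe (ψ : Multisegment e) (i : ZMod e) (L : ℕ) : ℕ :=
  Multiset.card (ψ.filter fun p => p.1 = i ∧ L ≤ p.2)

lemma countGe_antitone (ψ : Multisegment e) (i : ZMod e) : Antitone (countGe ψ i) :=
  fun _ _ hLL' => Multiset.card_le_card <|
    Multiset.monotone_filter_right _ fun _ hp => ⟨hp.1, hLL'.trans hp.2⟩

lemma countGe_le_card (ψ : Multisegment e) (i : ZMod e) (L : ℕ) :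
    countGe ψ i L ≤ Multiset.card ψ :=
  Multiset.card_le_card (Multiset.filter_le _ _)

lemma snd_lt_bound {ψ : Multisegment e} {p : ZMod e × ℕ} (hp : p ∈ ψ) : p.2 < bound ψ :=
  Nat.lt_succ_of_le <| Multiset.le_sum_of_mem (Multiset.mem_map_of_mem _ hp)

lemma countGe_eq_zero (ψ : Multisegment e) (i : ZMod e) {L : ℕ} (hL : bound ψ ≤ L) :
    countGe ψ i L = 0 :=
  Multiset.card_eq_zero.2 <| Multiset.filter_eq_nil.2 fun _ hp h =>
    (snd_lt_bound hp).not_ge (hL.trans h.2)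

lemma countGe_eq_sum (ψ : Multisegment e) (i : ZMod e) (L : ℕ) :
    countGe ψ i L = ∑ l ∈ Finset.Icc L (bound ψ), ψ.count (i, l) := by
  suffices ∀ s ≤ ψ, Multiset.card (s.filter fun p => p.1 = i ∧ L ≤ p.2) =
      ∑ l ∈ Finset.Icc L (bound ψ), s.count (i, l) from this ψ le_rfl
  intro s hs
  induction s using Multiset.induction_on with
  | empty => simp
  | cons a s ih =>
    obtain ⟨j, m⟩ := a
    have hm : m < bound ψ := snd_lt_bound (Multiset.mem_of_le hs (Multiset.mem_cons_self _ s))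
    rw [Multiset.filter_cons, Multiset.card_add, ih ((Multiset.le_cons_self s _).trans hs)]
    simp only [Multiset.count_cons, Finset.sum_add_distrib]
    rw [add_comm]
    congr 1
    by_cases hj : j = i
    · subst hj
      simp only [Prod.mk.injEq, true_and]
      simp only [Finset.sum_ite_eq', Finset.mem_Icc, hm.le, and_true]
      split_ifs <;> rfl
    · simp [hj, Ne.symm hj]

lemma countGe_eq_count_add (ψ : Multisegment e) (i : ZMod e) (L : ℕ) :
    countGe ψ i L = ψ.count (i, L) + countGe ψ i (L + 1) := by
  rw [countGe_eq_sum, countGe_eq_sum]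
  rcases le_or_gt L (bound ψ) with hL | hL
  · rw [Finset.Icc_add_one_left_eq_Ioc, ← Finset.Ioc_insert_left hL, Finset.sum_insert (by simp)]
  · have : ψ.count (i, L) = 0 :=
      Multiset.count_eq_zero.2 fun hmem => (snd_lt_bound hmem).not_gt hL
    simp [Finset.Icc_eq_empty_of_lt, hL, Nat.lt_succ_of_lt hL, this]

lemma eq_of_countGe_eq {ψ φ : Multisegment e} (hψ : Proper ψ) (hφ : Proper φ)
    (h : ∀ i L, 1 ≤ L → countGe ψ i L = countGe φ i L) : ψ = φ := by
  ext ⟨i, k⟩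
  rcases Nat.eq_zero_or_pos k with rfl | hk
  · rw [Multiset.count_eq_zero.2 fun hm => (hψ _ hm).false,
      Multiset.count_eq_zero.2 fun hm => (hφ _ hm).false]
  · have := countGe_eq_count_add ψ i k
    have := countGe_eq_count_add φ i k
    have := h i k hk
    have := h i (k + 1) (by omega)
    omega

lemma rHat_le_iff (ψ : Multisegment e) (i : ZMod e) (κ : ℕ) :
    rHat ψ i ≤ κ ↔ ∀ L, 1 ≤ L → countGe ψ i L ≤ countGe ψ (i + 1) L + κ := by
  rw [rHat_eq_reducedRCount, reducedRCount_le_iff]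
  refine forall₂_congr fun L _ => ?_
  rw [countGe_eq_sum, countGe_eq_sum]
  rcases le_or_gt L (bound ψ) with hL | hL
  · simp [hL]
  · simp [Finset.Icc_eq_empty_of_lt hL, hL.not_ge]

end Counting

section Rows

variable {l : ℕ} {v : Fin l → ℤ}

/-- The head `(v_c - j) mod e` of the segment that `f_v` attaches to the part `p c j`. -/
def rowHead (e : ℕ) (v : Fin l → ℤ) (c : Fin l) (j : ℕ) : ZMod e :=
  ((v c - j : ℤ) : ZMod e)

def kappa (e : ℕ) (v : Fin l → ℤ) (i : ZMod e) : ℕ :=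
  (Finset.univ.filter fun c : Fin l => ((v c : ZMod e) = i)).card

lemma rowHead_succ_add_one (c : Fin l) (j : ℕ) :
    rowHead e v c (j + 1) + 1 = rowHead e v c j := by
  simp only [rowHead]
  push_cast
  ring

lemma rowHead_eq_iff {c₁ c₂ : Fin l} {j₁ j₂ : ℕ} :
    rowHead e v c₁ j₁ = rowHead e v c₂ j₂ ↔ (e : ℤ) ∣ (v c₁ - j₁) - (v c₂ - j₂) := by
  rw [rowHead, rowHead, ZMod.intCast_eq_intCast_iff, Int.modEq_iff_dvd, dvd_sub_comm]

lemma IsLPartition.exists_eq_zero {p : Fin l → ℕ → ℕ} (hp : IsLPartition p) :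
    ∃ J, ∀ c j, J ≤ j → p c j = 0 := by
  choose B hB using hp.2
  exact ⟨Finset.univ.sup B, fun c j hj => hB c j ((Finset.le_sup (Finset.mem_univ c)).trans hj)⟩

variable {p : Fin l → ℕ → ℕ} {J : ℕ}

lemma fv_eq_sum (hJ : ∀ c j, J ≤ j → p c j = 0) :
    fv e v p = ∑ c, ∑ j ∈ Finset.range J,
      if 0 < p c j then ({(rowHead e v c j, p c j)} : Multisegment e) else 0 := by
  rw [fv, finsum_eq_sum_of_fintype]
  refine Finset.sum_congr rfl fun c _ => finsum_eq_sum_of_support_subset _ fun j hj => ?_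
  by_contra hjJ
  simp only [Finset.coe_range, Set.mem_Iio, not_lt] at hjJ
  simp [hJ c j hjJ] at hj

lemma proper_fv (hJ : ∀ c j, J ≤ j → p c j = 0) : Proper (fv e v p) := by
  intro s hs
  rw [fv_eq_sum hJ] at hs
  simp only [Multiset.mem_sum] at hs
  obtain ⟨c, -, j, -, hs⟩ := hs
  split_ifs at hs with hpos
  · rw [Multiset.mem_singleton.1 hs]
    exact hpos
  · simp at hs

lemma countGe_fv (hJ : ∀ c j, J ≤ j → p c j = 0) (i : ZMod e) {L : ℕ} (hL : 1 ≤ L) :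
    countGe (fv e v p) i L = ((Finset.univ ×ˢ Finset.range J).filter
      fun r : Fin l × ℕ => rowHead e v r.1 r.2 = i ∧ L ≤ p r.1 r.2).card := by
  rw [countGe, ← Multiset.countP_eq_card_filter, ← Multiset.coe_countPAddMonoidHom,
    fv_eq_sum hJ, map_sum, Finset.card_filter, Finset.sum_product]
  refine Finset.sum_congr rfl fun c _ => ?_
  rw [map_sum]
  refine Finset.sum_congr rfl fun j _ => ?_
  split_ifs <;> simp_all [← Multiset.cons_zero]

lemma card_rows_le (hp : ∀ c j, p c (j + 1) ≤ p c j) (i : ZMod e) (L : ℕ) :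
    ((Finset.univ ×ˢ Finset.range J).filter
        fun r : Fin l × ℕ => rowHead e v r.1 r.2 = i ∧ L ≤ p r.1 r.2).card ≤
      ((Finset.univ ×ˢ Finset.range J).filter
        fun r : Fin l × ℕ => rowHead e v r.1 r.2 = i + 1 ∧ L ≤ p r.1 r.2).card + kappa e v i := by
  refine (Finset.card_le_card fun r hr => ?_).trans ((Finset.card_union_le _ _).trans
    (add_le_add (Finset.card_image_le (f := fun r : Fin l × ℕ => (r.1, r.2 + 1)))
      (Finset.card_image_le (f := fun c : Fin l => (c, 0)))))
  obtain ⟨c, j⟩ := r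
  simp only [Finset.mem_filter, Finset.mem_product, Finset.mem_univ, true_and,
    Finset.mem_range] at hr
  obtain ⟨hjJ, hhead, hL⟩ := hr
  rcases j with _ | j
  · refine Finset.mem_union_right _ (Finset.mem_image.2 ⟨c, ?_, rfl⟩)
    simpa [rowHead] using hhead
  · refine Finset.mem_union_left _ (Finset.mem_image.2 ⟨(c, j), ?_, rfl⟩)
    simp only [Finset.mem_filter, Finset.mem_product, Finset.mem_univ, true_and,
      Finset.mem_range]
    exact ⟨by omega, by rw [← rowHead_succ_add_one, hhead], hL.trans (hp c j)⟩

theorem rHat_fv_le (hp : IsLPartition p) (i : ZMod e) : rHat (fv e v p) i ≤ kappa e v i := by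
  obtain ⟨J, hJ⟩ := hp.exists_eq_zero
  refine (rHat_le_iff _ i _).2 fun L hL => ?_
  rw [countGe_fv hJ i hL, countGe_fv hJ (i + 1) hL]
  exact card_rows_le hp.1 i L

end Rows

section Chains

variable {l : ℕ} {v : Fin l → ℤ}

lemma IsMulticharge.natCast_pos (hv : IsMulticharge e v) (c : Fin l) : (0 : ℤ) < e := by
  simpa using hv.2 c c

/-- For a row of content `x = v_c - j` in component `c`, the number of rows of component `c'`
before it in its chain: those of content `x + e, x + 2e, …` (at most `v_{c'}`), and the row of
content `x` itself when `c' < c`. -/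
def rankTerm (e : ℕ) (v : Fin l → ℤ) (x : ℤ) (c c' : Fin l) : ℕ :=
  if 0 ≤ v c' - x then ((v c' - x) / e).toNat + if c' < c then 1 else 0 else 0

def rowRank (e : ℕ) (v : Fin l → ℤ) (c : Fin l) (j : ℕ) : ℕ :=
  ∑ c', rankTerm e v (v c - j) c c'

lemma rankTerm_sub_one (hv : IsMulticharge e v) (c : Fin l) (j : ℕ) (c' : Fin l) :
    rankTerm e v (v c - j - 1) c c' =
      rankTerm e v (v c - j) c c' + if (v c' : ZMod e) = rowHead e v c (j + 1) then 1 else 0 := by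
  have he := hv.natCast_pos c
  have hhead : (v c' : ZMod e) = rowHead e v c (j + 1) ↔ (e : ℤ) ∣ v c' - (v c - j) + 1 := by
    rw [rowHead, ZMod.intCast_eq_intCast_iff_dvd_sub, ← dvd_neg]
    push_cast
    ring_nf
  simp only [rankTerm, hhead, show v c' - (v c - j - 1) = v c' - (v c - j) + 1 by ring]
  rcases lt_trichotomy (v c' - (v c - j)) (-1) with hn | hn | hn
  · have hnd : ¬ (e : ℤ) ∣ v c' - (v c - j) + 1 := fun hd => by
      have := Int.le_of_dvd (by omega) (dvd_neg.2 hd)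
      have := hv.2 c' c
      omega
    rw [if_neg (by omega), if_neg (by omega), if_neg hnd]
  · have hc' : c' < c := lt_of_not_ge fun h => by have := hv.1 h; omega
    simp [hn, hc']
  · lift v c' - (v c - j) to ℕ using (by omega) with n
    have := @Nat.succ_div n e
    norm_cast
    simp only [le_add_iff_nonneg_left, zero_le, if_true, this]
    ring

lemma rowRank_succ (hv : IsMulticharge e v) (c : Fin l) (j : ℕ) :
    rowRank e v c (j + 1) = rowRank e v c j + kappa e v (rowHead e v c (j + 1)) := by
  rw [rowRank, rowRank, kappa, Finset.card_filter, ← Finset.sum_add_distrib]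
  refine Finset.sum_congr rfl fun c' _ => ?_
  rw [← rankTerm_sub_one hv]
  push_cast
  ring_nf

def nextRow (e : ℕ) (v : Fin l → ℤ) (r : Fin l × ℕ) : Fin l × ℕ :=
  if h : r.1.1 + 1 < l then (⟨r.1.1 + 1, h⟩, r.2 + (v ⟨r.1.1 + 1, h⟩ - v r.1).toNat)
  else (⟨0, r.1.pos⟩, r.2 + ((e : ℤ) + v ⟨0, r.1.pos⟩ - v r.1).toNat)

lemma content_nextRow (hv : IsMulticharge e v) (r : Fin l × ℕ) :
    v (nextRow e v r).1 - (nextRow e v r).2 = v r.1 - r.2 - if r.1.1 + 1 < l then 0 else e := by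
  unfold nextRow
  split_ifs with h
  · have : v r.1 ≤ v ⟨r.1.1 + 1, h⟩ := hv.1 (Fin.mk_le_mk.2 (Nat.le_succ _))
    push_cast
    rw [Int.toNat_of_nonneg (by omega)]
    ring
  · have := hv.2 ⟨0, r.1.pos⟩ r.1
    push_cast
    rw [Int.toNat_of_nonneg (by omega)]
    ring

lemma rowHead_nextRow (hv : IsMulticharge e v) (r : Fin l × ℕ) :
    rowHead e v (nextRow e v r).1 (nextRow e v r).2 = rowHead e v r.1 r.2 := by
  rw [rowHead, content_nextRow hv, rowHead]
  split_ifs <;> simp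

lemma rankTerm_nextRow (hv : IsMulticharge e v) (r : Fin l × ℕ) (c' : Fin l) :
    rankTerm e v (v (nextRow e v r).1 - (nextRow e v r).2) (nextRow e v r).1 c' =
      rankTerm e v (v r.1 - r.2) r.1 c' + if c' = r.1 then 1 else 0 := by
  have he := hv.natCast_pos c'
  obtain ⟨c, j⟩ := r
  rw [content_nextRow hv]
  unfold nextRow rankTerm
  by_cases h : c.1 + 1 < l
  · simp only [dif_pos h, if_pos h]
    by_cases hc : c' = c
    · subst hc
      simp [Fin.lt_def]
    · have hlt : c' < ⟨c.1 + 1, h⟩ ↔ c' < c := by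
        rw [Fin.lt_def, Fin.lt_def, Nat.lt_succ_iff_lt_or_eq, or_iff_left (Fin.val_ne_of_ne hc)]
      simp [hlt, hc]
  · have hlast : c' ≤ c := Fin.le_def.2 (by omega)
    have h0 : ¬ c' < ⟨0, c.pos⟩ := by simp [Fin.lt_def]
    simp only [dif_neg h, if_neg h, h0, if_false, add_zero,
      show v c' - (v c - j - e) = v c' - (v c - j) + e by ring]
    by_cases hm : 0 ≤ v c' - (v c - j)
    · rw [if_pos (by omega), if_pos hm, Int.add_ediv_of_dvd_right dvd_rfl, Int.ediv_self he.ne',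
        Int.toNat_add (Int.ediv_nonneg hm he.le) zero_le_one]
      rcases hlast.lt_or_eq with hc | hc <;> simp [hc, ne_of_lt]
    · have hc : c' ≠ c := by rintro rfl; simp at hm
      have := hv.2 c' c
      rw [if_pos (by omega), if_neg hm, Int.ediv_eq_zero_of_lt (by omega) (by omega)]
      simp [hc]

lemma rowRank_nextRow (hv : IsMulticharge e v) (r : Fin l × ℕ) :
    rowRank e v (nextRow e v r).1 (nextRow e v r).2 = rowRank e v r.1 r.2 + 1 := by
  simp only [rowRank, rankTerm_nextRow hv, Finset.sum_add_distrib, Finset.sum_ite_eq',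
    Finset.mem_univ, if_true]

lemma rowRank_eq_zero {c : Fin l} {j : ℕ}
    (hbefore : ∀ c' < c, v c' < v c - j) (hafter : ∀ c', v c' - (v c - j) < e) :
    rowRank e v c j = 0 := by
  refine Finset.sum_eq_zero fun c' _ => ?_
  unfold rankTerm
  by_cases hc : c' < c
  · rw [if_neg (by have := hbefore c' hc; omega)]
  · split_ifs with hm
    · rw [Int.ediv_eq_zero_of_lt hm (hafter c')]
      simp
    · rfl

lemma exists_nextRow_eq (hv : IsMulticharge e v) {r : Fin l × ℕ}
    (hrank : rowRank e v r.1 r.2 ≠ 0) : ∃ p, nextRow e v p = r := by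
  obtain ⟨⟨_ | k, hk⟩, j⟩ := r
  · have hL : l - 1 < l := by omega
    have hE := hv.2 ⟨0, hk⟩ ⟨l - 1, hL⟩
    by_cases hj : ((e : ℤ) + v ⟨0, hk⟩ - v ⟨l - 1, hL⟩).toNat ≤ j
    · refine ⟨(⟨l - 1, hL⟩, j - ((e : ℤ) + v ⟨0, hk⟩ - v ⟨l - 1, hL⟩).toNat), ?_⟩
      rw [nextRow, dif_neg (by dsimp only; omega)]
      ext <;> dsimp only
      omega
    · refine absurd (rowRank_eq_zero (c := ⟨0, hk⟩) (j := j)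
        (fun c' hc' => absurd hc' (Nat.not_lt_zero _)) fun c' => ?_) hrank
      have := hv.1 (show c' ≤ ⟨l - 1, hL⟩ from Nat.le_sub_one_of_lt c'.2)
      omega
  · have hk' : k < l := by omega
    have hd : v ⟨k, hk'⟩ ≤ v ⟨k + 1, hk⟩ := hv.1 (Fin.mk_le_mk.2 k.le_succ)
    by_cases hj : (v ⟨k + 1, hk⟩ - v ⟨k, hk'⟩).toNat ≤ j
    · refine ⟨(⟨k, hk'⟩, j - (v ⟨k + 1, hk⟩ - v ⟨k, hk'⟩).toNat), ?_⟩
      rw [nextRow, dif_pos hk]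
      ext <;> dsimp only
      omega
    · refine absurd (rowRank_eq_zero (c := ⟨k + 1, hk⟩) (j := j) (fun c' hc' => ?_)
        fun c' => ?_) hrank
      · have := hv.1 (show c' ≤ ⟨k, hk'⟩ from Nat.le_of_lt_succ hc')
        omega
      · have := hv.2 ⟨k, hk'⟩ c'
        omega

lemma rowRank_ne_zero_of_lt (hv : IsMulticharge e v) {c₁ c₂ : Fin l} {j₁ j₂ : ℕ}
    (hhead : rowHead e v c₁ j₁ = rowHead e v c₂ j₂)
    (hlt : v c₂ - j₂ < v c₁ - j₁ ∨ v c₁ - j₁ = v c₂ - j₂ ∧ c₁ < c₂) :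
    rowRank e v c₂ j₂ ≠ 0 := by
  have he := hv.natCast_pos c₁
  refine (Finset.sum_pos' (fun _ _ => Nat.zero_le _) ⟨c₁, Finset.mem_univ _, ?_⟩).ne'
  unfold rankTerm
  rcases hlt with hlt | ⟨heq, hc⟩
  · have := Int.le_of_dvd (by omega) (rowHead_eq_iff.1 hhead)
    have : 1 ≤ (v c₁ - (v c₂ - j₂)) / e := by
      rw [Int.le_ediv_iff_mul_le he]
      omega
    rw [if_pos (by omega)]
    omega
  · rw [if_pos (by omega), if_pos hc]
    omega

lemma eq_of_rowHead_eq_of_rowRank_eq (hv : IsMulticharge e v) {r₁ r₂ : Fin l × ℕ}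
    (hhead : rowHead e v r₁.1 r₁.2 = rowHead e v r₂.1 r₂.2)
    (hrank : rowRank e v r₁.1 r₁.2 = rowRank e v r₂.1 r₂.2) : r₁ = r₂ := by
  induction hn : rowRank e v r₁.1 r₁.2 generalizing r₁ r₂ with
  | zero =>
    obtain ⟨c₁, j₁⟩ := r₁
    obtain ⟨c₂, j₂⟩ := r₂
    dsimp only at hhead hrank hn
    rcases lt_trichotomy (v c₁ - j₁) (v c₂ - j₂) with hx | hx | hx
    · exact absurd hn (rowRank_ne_zero_of_lt hv hhead.symm (Or.inl hx))
    · rcases lt_trichotomy c₁ c₂ with hc | rfl | hc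
      · exact absurd (hrank ▸ hn) (rowRank_ne_zero_of_lt hv hhead (Or.inr ⟨hx, hc⟩))
      · simp only [Prod.mk.injEq, true_and]
        omega
      · exact absurd hn (rowRank_ne_zero_of_lt hv hhead.symm (Or.inr ⟨hx.symm, hc⟩))
    · exact absurd (hrank ▸ hn) (rowRank_ne_zero_of_lt hv hhead (Or.inl hx))
  | succ n ih =>
    obtain ⟨p₁, rfl⟩ := exists_nextRow_eq hv (r := r₁) (by omega)
    obtain ⟨p₂, rfl⟩ := exists_nextRow_eq hv (r := r₂) (by omega)
    rw [rowHead_nextRow hv, rowHead_nextRow hv] at hhead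
    simp only [rowRank_nextRow hv] at hrank hn
    rw [ih hhead (by omega) (by omega)]

lemma exists_rowRank_eq_zero (hv : IsMulticharge e v) (r : Fin l × ℕ) :
    ∃ r₀ : Fin l × ℕ, rowHead e v r₀.1 r₀.2 = rowHead e v r.1 r.2 ∧ rowRank e v r₀.1 r₀.2 = 0 := by
  induction hn : rowRank e v r.1 r.2 using Nat.strong_induction_on generalizing r with
  | _ n ih =>
    rcases Nat.eq_zero_or_pos n with rfl | hpos
    · exact ⟨r, rfl, hn⟩
    · obtain ⟨p, rfl⟩ := exists_nextRow_eq hv (r := r) (by omega)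
      obtain ⟨r₀, hhead, hrank⟩ := ih _ (by rw [← hn, rowRank_nextRow hv]; omega) p rfl
      exact ⟨r₀, hhead.trans (rowHead_nextRow hv p).symm, hrank⟩

lemma exists_rowRank_eq (hv : IsMulticharge e v) (hl : 0 < l) (i : ZMod e) (n : ℕ) :
    ∃ r : Fin l × ℕ, rowHead e v r.1 r.2 = i ∧ rowRank e v r.1 r.2 = n := by
  induction n with
  | zero =>
    have : NeZero e := ⟨by have := hv.natCast_pos ⟨0, hl⟩; omega⟩
    obtain ⟨r₀, hhead, hrank⟩ :=
      exists_rowRank_eq_zero hv (⟨0, hl⟩, ((v ⟨0, hl⟩ : ZMod e) - i).val)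
    refine ⟨r₀, ?_, hrank⟩
    rw [hhead]
    simp [rowHead]
  | succ n ih =>
    obtain ⟨r, hhead, hrank⟩ := ih
    exact ⟨nextRow e v r, (rowHead_nextRow hv r).trans hhead, by rw [rowRank_nextRow hv, hrank]⟩

lemma lt_mul_rowRank_add_one (hv : IsMulticharge e v) (c : Fin l) (j : ℕ) :
    j < e * (rowRank e v c j + 1) := by
  have he := hv.natCast_pos c
  have hself : rankTerm e v (v c - j) c c = ((j : ℤ) / e).toNat := by
    simp [rankTerm]
  have hle : ((j : ℤ) / e).toNat ≤ rowRank e v c j :=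
    hself ▸ Finset.single_le_sum (f := rankTerm e v (v c - j) c) (fun _ _ => Nat.zero_le _)
      (Finset.mem_univ c)
  have := Int.lt_ediv_add_one_mul_self (j : ℤ) he
  have : (j : ℤ) < e * (rowRank e v c j + 1) := by
    nlinarith [Int.toNat_of_nonneg (Int.ediv_nonneg j.cast_nonneg he.le)]
  exact_mod_cast this

lemma card_rows_rowRank_lt (hv : IsMulticharge e v) (hl : 0 < l) (i : ZMod e) {n J : ℕ}
    (hJ : e * n ≤ J) :
    ((Finset.univ ×ˢ Finset.range J).filter fun r : Fin l × ℕ =>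
      rowHead e v r.1 r.2 = i ∧ rowRank e v r.1 r.2 < n).card = n := by
  refine (Finset.card_bij (fun r _ => rowRank e v r.1 r.2) (fun r hr => ?_)
    (fun r₁ hr₁ r₂ hr₂ h => ?_) fun m hm => ?_).trans (Finset.card_range n)
  · simp only [Finset.mem_filter] at hr
    exact Finset.mem_range.2 hr.2.2
  · simp only [Finset.mem_filter] at hr₁ hr₂
    exact eq_of_rowHead_eq_of_rowRank_eq hv (hr₁.2.1.trans hr₂.2.1.symm) h
  · obtain ⟨r, hhead, hrank⟩ := exists_rowRank_eq hv hl i m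
    have hm := Finset.mem_range.1 hm
    have := lt_mul_rowRank_add_one hv r.1 r.2
    have := Nat.mul_le_mul_left e (show rowRank e v r.1 r.2 + 1 ≤ n by omega)
    refine ⟨r, ?_, hrank⟩
    simp only [Finset.mem_filter, Finset.mem_product, Finset.mem_univ, Finset.mem_range,
      true_and]
    exact ⟨by omega, hhead, by omega⟩

end Chains

section Construction

variable {l : ℕ} {v : Fin l → ℤ} {ψ : Multisegment e}

/-- Fill the chain of head `i` with the lengths of the segments of `ψ` of head `i`, in decreasing
order: the row of rank `n` receives the largest `L` such that more than `n` segments of head `i`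
have length `≥ L`. -/
def fillChains (e : ℕ) (v : Fin l → ℤ) (ψ : Multisegment e) (c : Fin l) (j : ℕ) : ℕ :=
  Nat.findGreatest (fun L => rowRank e v c j < countGe ψ (rowHead e v c j) L) (bound ψ)

lemma le_fillChains_iff (c : Fin l) (j : ℕ) {L : ℕ} (hL : 1 ≤ L) :
    L ≤ fillChains e v ψ c j ↔ rowRank e v c j < countGe ψ (rowHead e v c j) L := by
  constructor
  · intro h
    have hspec : rowRank e v c j < countGe ψ (rowHead e v c j) (fillChains e v ψ c j) :=
      Nat.findGreatest_of_ne_zero (m := fillChains e v ψ c j) rfl (by omega)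
    exact hspec.trans_le (countGe_antitone ψ _ h)
  · intro h
    refine Nat.le_findGreatest ?_ h
    by_contra! hB
    rw [countGe_eq_zero ψ _ hB.le] at h
    omega

lemma fillChains_succ_le (hv : IsMulticharge e v)
    (hκ : ∀ i L, 1 ≤ L → countGe ψ i L ≤ countGe ψ (i + 1) L + kappa e v i) (c : Fin l) (j : ℕ) :
    fillChains e v ψ c (j + 1) ≤ fillChains e v ψ c j := by
  rcases Nat.eq_zero_or_pos (fillChains e v ψ c (j + 1)) with h0 | hpos
  · omega
  · have h := (le_fillChains_iff c (j + 1) hpos).1 le_rfl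
    have := hκ (rowHead e v c (j + 1)) _ hpos
    rw [rowHead_succ_add_one] at this
    rw [rowRank_succ hv] at h
    exact (le_fillChains_iff c j hpos).2 (by omega)

lemma fillChains_nextRow_le (hv : IsMulticharge e v) (r : Fin l × ℕ) :
    fillChains e v ψ (nextRow e v r).1 (nextRow e v r).2 ≤ fillChains e v ψ r.1 r.2 := by
  rcases Nat.eq_zero_or_pos (fillChains e v ψ (nextRow e v r).1 (nextRow e v r).2) with h0 | hpos
  · omega
  · have h := (le_fillChains_iff _ _ hpos).1 le_rfl
    rw [rowHead_nextRow hv, rowRank_nextRow hv] at h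
    exact (le_fillChains_iff _ _ hpos).2 (by omega)

lemma fillChains_eq_zero (hv : IsMulticharge e v) (c : Fin l) {j : ℕ}
    (hj : e * (Multiset.card ψ + 1) ≤ j) : fillChains e v ψ c j = 0 := by
  by_contra h0
  have h := (le_fillChains_iff c j le_rfl).1 (Nat.one_le_iff_ne_zero.2 h0)
  have := countGe_le_card ψ (rowHead e v c j) 1
  have := lt_mul_rowRank_add_one hv c j
  have := Nat.mul_le_mul_left e (show rowRank e v c j + 1 ≤ Multiset.card ψ + 1 by omega)
  omega

lemma countGe_fv_fillChains (hv : IsMulticharge e v) (hl : 0 < l) (i : ZMod e) {L : ℕ}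
    (hL : 1 ≤ L) : countGe (fv e v (fillChains e v ψ)) i L = countGe ψ i L := by
  rw [countGe_fv (fun c _ hj => fillChains_eq_zero hv c hj) i hL,
    Finset.filter_congr fun r _ => and_congr_right fun hhead => by
      rw [le_fillChains_iff _ _ hL, hhead],
    card_rows_rowRank_lt hv hl i
      (Nat.mul_le_mul_left e (Nat.le_succ_of_le (countGe_le_card ψ i L)))]

theorem fv_fillChains (hv : IsMulticharge e v) (hl : 0 < l) (hψ : Proper ψ) :
    fv e v (fillChains e v ψ) = ψ :=
  eq_of_countGe_eq (proper_fv fun c _ hj => fillChains_eq_zero hv c hj) hψ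
    fun i _ hL => countGe_fv_fillChains hv hl i hL

lemma fillChains_tail_ne (hψ : Aperiodic ψ) {k : ℕ} (hk : 0 < k) :
    ∃ t : ZMod e, ∀ c j, fillChains e v ψ c j = k →
      (((k : ℤ) - ((j : ℤ) + 1) + v c : ℤ) : ZMod e) ≠ t := by
  obtain ⟨i, hi⟩ := hψ k hk
  refine ⟨i + k - 1, fun c j hcj htail => ?_⟩
  have hhead : rowHead e v c j = i := by
    rw [rowHead]
    push_cast at htail ⊢
    linear_combination htail
  have hlt := (le_fillChains_iff c j hk).1 hcj.ge
  have hnlt : ¬ rowRank e v c j < countGe ψ (rowHead e v c j) (k + 1) := fun h => by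
    have := (le_fillChains_iff c j (Nat.le_succ_of_le hk)).2 h
    omega
  have := countGe_eq_count_add ψ i k
  rw [hhead] at hlt hnlt
  omega

lemma flotw_of_nextRow_le {p : Fin l → ℕ → ℕ} (hp : IsLPartition p)
    (hnext : ∀ r, p (nextRow e v r).1 (nextRow e v r).2 ≤ p r.1 r.2)
    (htail : ∀ k : ℕ, 0 < k → ∃ t : ZMod e, ∀ (c : Fin l) (j : ℕ), p c j = k →
      (((k : ℤ) - ((j : ℤ) + 1) + v c : ℤ) : ZMod e) ≠ t) :
    FLOTW e v p := by
  refine ⟨hp, fun c h j => ?_, fun hl j => ?_, htail⟩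
  · have := hnext (⟨c, Nat.lt_of_succ_lt h⟩, j)
    rwa [nextRow, dif_pos h] at this
  · have := hnext (⟨l - 1, Nat.sub_lt hl Nat.one_pos⟩, j)
    rwa [nextRow, dif_neg (by dsimp only; omega)] at this

theorem flotw_fillChains (hv : IsMulticharge e v) (hψ : Aperiodic ψ)
    (hκ : ∀ i L, 1 ≤ L → countGe ψ i L ≤ countGe ψ (i + 1) L + kappa e v i) :
    FLOTW e v (fillChains e v ψ) :=
  flotw_of_nextRow_le
    ⟨fillChains_succ_le hv hκ, fun c => ⟨_, fun _ hj => fillChains_eq_zero hv c hj⟩⟩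
    (fillChains_nextRow_le hv) fun _ hk => fillChains_tail_ne hψ hk

end Construction

theorem admissible_multicharge_iff_general (e : ℕ) {l : ℕ} (hl : 0 < l)
    (v : Fin l → ℤ) (hv : IsMulticharge e v)
    (ψ : Multisegment e) (hψp : Proper ψ) (hψa : Aperiodic ψ) :
    (∃ p : Fin l → ℕ → ℕ, FLOTW e v p ∧ fv e v p = ψ) ↔
      ∀ i : ZMod e,
        rHat ψ i ≤ (Finset.univ.filter fun c : Fin l => ((v c : ZMod e) = i)).card := by
  constructor
  · rintro ⟨p, hp, rfl⟩ i
    exact rHat_fv_le hp.1 i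
  · intro hκ
    exact ⟨fillChains e v ψ, flotw_fillChains hv hψa fun i => (rHat_le_iff ψ i _).1 (hκ i),
      fv_fillChains hv hl hψp⟩

/-- An aperiodic multisegment `ψ` lies in the image of `f_v` iff
`κ_i(v) ≥ r̂_i(ψ)` for every `i ∈ ℤ/eℤ`, where `κ_i(v)` is the number of
coordinates of `v` congruent to `i` mod `e`. -/
theorem admissible_multicharge_iff (e : ℕ) (he : 2 ≤ e) {l : ℕ} (hl : 0 < l)
    (v : Fin l → ℤ) (hv : IsMulticharge e v)
    (ψ : Multisegment e) (hψp : Proper ψ) (hψa : Aperiodic ψ) :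
    (∃ p : Fin l → ℕ → ℕ, FLOTW e v p ∧ fv e v p = ψ) ↔
      ∀ i : ZMod e,
        rHat ψ i ≤ (Finset.univ.filter fun c : Fin l => ((v c : ZMod e) = i)).card :=
  admissible_multicharge_iff_general e hl v hv ψ hψp hψa

end AffineA
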